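/- Let R be a ring with proper involution and let y be a core-EP inverse of a ∈ R. Set p = a y, which is a self-adjoint idempotent. Then (1 − p) a p = 0; that is, relative to the Pierce decomposition determined by p, the element a is upper triangular. -/

import Mathlib

/-!
Since `a * y ^ 2 = y`, induction gives `a ^ n * y ^ (n + 1) = y` for every `n`, so
`p = a * y = a ^ (k + 1) * y ^ (k + 1)` and `a * p` both lie in `a ^ (k + 1) * R`.
On the other hand `a ^ k = y * a ^ (k + 1)` gives `p * a ^ (k + 1) = a ^ (k + 1)`, so `p` is a left
identity on `a ^ (k + 1) * R`. Applied to `p` and to `a * p` this yields `p * p = p` and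
`p * a * p = a * p`.
-/

/-- `z` is an `m`-weak group inverse of `a`. -/
def IsMWGI {R : Type*} [Ring R] [StarRing R] (m : ℕ) (a z : R) : Prop :=
  a * z ^ 2 = z ∧ ∃ k : ℕ, z * a ^ (k + 1) = a ^ k ∧
    star (a ^ k) * a ^ (m + 1) * z = star (a ^ k) * a ^ m

/-- `w` is a weak group inverse of `b`. -/
def IsWGI {R : Type*} [Ring R] [StarRing R] (b w : R) : Prop :=
  b * w ^ 2 = w ∧ star (star b * b ^ 2 * w) = star b * b ^ 2 * w ∧
    ∃ k : ℕ, b ^ k = w * b ^ (k + 1)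

/-- `x` is a group inverse of `u`. -/
def IsGroupInv {R : Type*} [Ring R] (u x : R) : Prop :=
  u * x ^ 2 = x ∧ u * x = x * u ∧ u = u ^ 2 * x

/-- `d` is a Drazin inverse of `a`. -/
def IsDrazin {R : Type*} [Ring R] (a d : R) : Prop :=
  a * d ^ 2 = d ∧ a * d = d * a ∧ ∃ k : ℕ, a ^ k = d * a ^ (k + 1)

/-- `y` is a core-EP inverse of `a`. -/
def IsCoreEP {R : Type*} [Ring R] [StarRing R] (a y : R) : Prop :=
  a * y ^ 2 = y ∧ star (a * y) = a * y ∧ ∃ k : ℕ, a ^ k = y * a ^ (k + 1)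

section Monoid

variable {M : Type*} [Monoid M] {a y : M}

theorem pow_mul_pow_succ_of_mul_sq (h : a * y ^ 2 = y) (n : ℕ) : a ^ n * y ^ (n + 1) = y := by
  induction n with
  | zero => simp
  | succ n ih =>
    calc a ^ (n + 1) * y ^ (n + 1 + 1) = a ^ n * ((a * y ^ 2) * y ^ n) := by
          rw [pow_succ, show n + 1 + 1 = 2 + n by omega, pow_add]
          simp only [mul_assoc]
      _ = y := by rw [h, ← pow_succ', ih]

theorem pow_succ_mul_pow_succ_of_mul_sq (h : a * y ^ 2 = y) (n : ℕ) :
    a ^ (n + 1) * y ^ (n + 1) = a * y := by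
  rw [pow_succ', mul_assoc, pow_mul_pow_succ_of_mul_sq h]

theorem mul_mul_pow_succ_of_eq_mul_pow_succ {k : ℕ} (hk : a ^ k = y * a ^ (k + 1)) :
    a * y * a ^ (k + 1) = a ^ (k + 1) := by
  rw [mul_assoc, ← hk, pow_succ']

variable {k : ℕ} (h : a * y ^ 2 = y) (hk : a ^ k = y * a ^ (k + 1))
include h hk

theorem isIdempotentElem_mul_of_mul_sq : IsIdempotentElem (a * y) :=
  calc a * y * (a * y) = a * y * a ^ (k + 1) * y ^ (k + 1) := by
        rw [mul_assoc _ (a ^ (k + 1)), pow_succ_mul_pow_succ_of_mul_sq h]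
    _ = a * y := by
        rw [mul_mul_pow_succ_of_eq_mul_pow_succ hk, pow_succ_mul_pow_succ_of_mul_sq h]

theorem mul_mul_mul_mul_self_of_mul_sq : a * y * (a * (a * y)) = a * (a * y) := by
  have hmem : a * (a * y) = a ^ (k + 1) * (a * y ^ (k + 1)) := by
    rw [← pow_succ_mul_pow_succ_of_mul_sq h k, ← mul_assoc, ← pow_succ', pow_succ, mul_assoc]
  rw [hmem, ← mul_assoc, mul_mul_pow_succ_of_eq_mul_pow_succ hk]

end Monoid

theorem coreEP_upper_triangular_general {R : Type*} [Ring R] [StarRing R]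
    (a y : R) (hy : IsCoreEP a y) (p : R) (hp : p = a * y) :
    star p = p ∧ p ^ 2 = p ∧ (1 - p) * a * p = 0 := by
  obtain ⟨hay, hself, k, hk⟩ := hy
  subst hp
  refine ⟨hself, (sq _).trans (isIdempotentElem_mul_of_mul_sq hay hk), ?_⟩
  rw [sub_mul, sub_mul, one_mul, mul_assoc _ a, mul_mul_mul_mul_self_of_mul_sq hay hk, sub_self]

theorem coreEP_upper_triangular {R : Type*} [Ring R] [StarRing R]
    (hproper : ∀ x : R, star x * x = 0 → x = 0)
    (a y : R) (hy : IsCoreEP a y) (p : R) (hp : p = a * y) :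
    star p = p ∧ p ^ 2 = p ∧ (1 - p) * a * p = 0 :=
  coreEP_upper_triangular_general a y hy p hp
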